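/- arXiv:2012.14472 — 4 statements merged into one kernel-verified Lean document; each statement's English description precedes it below -/
import Mathlib

section
/- Let $C$ be an associative algebra over a field $\Bbbk$ equipped with an algebra homomorphism $\Delta\colon C\to C\otimes C$ that is coassociative, and an algebra homomorphism $\varepsilon\colon C\to\Bbbk$ that is a left counit, i.e., $(\varepsilon\otimes\mathrm{id})\Delta=\mathrm{id}$ (but possibly not a right counit). Fix $b\in C$ with $\varepsilon(b)=1$ and define $C_b$ to be the linear span of the elements $(\mathrm{id}\otimes\varepsilon)(\Delta(a)(1\otimes b))=a_{(1)}\varepsilon(a_{(2)}b)$ for $a\in C$. Then $C_b$ is a subalgebra of $C$: the product of two such elements is again of this form, namely $\big(a_{(1)}\varepsilon(a_{(2)}b)\big)\big(d_{(1)}\varepsilon(d_{(2)}b)\big)=(ad)_{(1)}\varepsilon((ad)_{(2)}b)$. -/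
open TensorProduct LinearMap

noncomputable section

variable (k : Type*) {C : Type*} [Field k] [NonUnitalSemiring C] [Module k C]
  [SMulCommClass k C C] [IsScalarTower k C C]

/-- The element `x_b(a) = a₍₁₎ ε(a₍₂₎ b) = (id ⊗ ε)(Δ(a)(1 ⊗ b))`. -/
def cbElt (Δ : C →ₗ[k] C ⊗[k] C) (ε : C →ₗ[k] k) (b a : C) : C :=
  TensorProduct.rid k C (lTensor C (ε ∘ₗ LinearMap.mulRight k b) (Δ a))

/-- For a (not necessarily unital or counital) "multiplier bialgebra"
`C` with multiplicative coassociative `Δ` and multiplicative left counit `ε`, and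
`b ∈ C` with `ε b = 1`, the span `C_b` of the elements `a₍₁₎ ε(a₍₂₎ b)` is a
subalgebra: the product of two such elements is again of this form, namely
`(a₍₁₎ε(a₍₂₎b)) (d₍₁₎ε(d₍₂₎b)) = (ad)₍₁₎ ε((ad)₍₂₎ b)`. -/
theorem stmt_11 (Δ : C →ₗ[k] C ⊗[k] C) (ε : C →ₗ[k] k)
    (hΔmul : ∀ a d : C, Δ (a * d) = Δ a * Δ d)
    (hεmul : ∀ a d : C, ε (a * d) = ε a * ε d)
    (hcoassoc : ∀ a : C, lTensor C Δ (Δ a) =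
      (TensorProduct.assoc k C C C) (rTensor C Δ (Δ a)))
    (hleftcounit : ∀ a : C, TensorProduct.lid k C (rTensor C ε (Δ a)) = a)
    (b : C) (hb : ε b = 1) :
    ∀ a d : C, cbElt k Δ ε b a * cbElt k Δ ε b d = cbElt k Δ ε b (a * d) := by
  have hε' : ε ∘ₗ LinearMap.mulRight k b = ε := by
    ext a
    simp [LinearMap.mulRight_apply, hεmul, hb]
  have key : ∀ X Y : C ⊗[k] C,
      (TensorProduct.rid k C) (lTensor C ε X) * (TensorProduct.rid k C) (lTensor C ε Y)
        = (TensorProduct.rid k C) (lTensor C ε (X * Y)) := by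
    intro X Y
    induction X using TensorProduct.induction_on with
    | zero => simp
    | tmul x₁ x₂ =>
      induction Y using TensorProduct.induction_on with
      | zero => simp
      | tmul y₁ y₂ =>
        simp [Algebra.TensorProduct.tmul_mul_tmul, hεmul, smul_mul_assoc,
          mul_smul_comm, smul_smul, mul_comm]
      | add Y₁ Y₂ h1 h2 => simp only [mul_add, map_add, h1, h2]
    | add X₁ X₂ h1 h2 => simp only [add_mul, map_add, h1, h2]
  intro a d
  simp only [cbElt, hε']
  rw [hΔmul, key]
end
end

section
/- Let $C$ be an associative algebra with coassociative algebra homomorphism $\Delta\colon C\to C\otimes C$ and algebra homomorphism $\varepsilon\colon C\to\Bbbk$ satisfying the left counit law $(\varepsilon\otimes\mathrm{id})\Delta=\mathrm{id}$. Then for every $a,b\in C$ with $\varepsilon(b)=1$, the element $x=a_{(1)}\varepsilon(a_{(2)}b)$ satisfies $(\mathrm{id}\otimes\varepsilon)\Delta(x)=x$; that is, $\varepsilon$ acts as a two-sided counit on the subspace $C_b=\mathrm{span}\{a_{(1)}\varepsilon(a_{(2)}b):a\in C\}$. -/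
open TensorProduct LinearMap

noncomputable section

variable (k : Type*) {C : Type*} [Field k] [NonUnitalSemiring C] [Module k C]
  [SMulCommClass k C C] [IsScalarTower k C C]

/-- Naturality: applying `Δ` after contracting the right `k`-factor equals
contracting after applying `Δ` to the left factor. -/
lemma delta_rid_lTensor (Δ : C →ₗ[k] C ⊗[k] C) (f : C →ₗ[k] k) (t : C ⊗[k] C) :
    Δ (TensorProduct.rid k C (lTensor C f t)) =
      TensorProduct.rid k (C ⊗[k] C) (lTensor (C ⊗[k] C) f (rTensor C Δ t)) := by
  induction t using TensorProduct.induction_on with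
  | zero => simp
  | tmul c d => simp [TensorProduct.smul_tmul']
  | add x y hx hy => simp [map_add, hx, hy]

lemma assoc_piece (ε : C →ₗ[k] k) (f : C →ₗ[k] k)
    (c : C) (s : C ⊗[k] C) :
    TensorProduct.rid k C (lTensor C ε (TensorProduct.rid k (C ⊗[k] C)
        (lTensor (C ⊗[k] C) f ((TensorProduct.assoc k C C C).symm (c ⊗ₜ[k] s))))) =
      f (TensorProduct.lid k C (rTensor C ε s)) • c := by
  induction s using TensorProduct.induction_on with
  | zero => simp
  | tmul e g =>
      simp [TensorProduct.assoc_symm_tmul, smul_smul, mul_comm]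
  | add x y hx hy => simp [tmul_add, map_add, hx, hy, add_smul]

/-- With `Δ` coassociative multiplicative and `ε` a multiplicative
left counit, for every `a` and `b` with `ε b = 1`, the element
`x = a₍₁₎ ε(a₍₂₎ b)` satisfies `(id ⊗ ε) Δ (x) = x`, i.e. `ε` is a two-sided
counit on `C_b`. -/
theorem stmt_12 (Δ : C →ₗ[k] C ⊗[k] C) (ε : C →ₗ[k] k)
    (hΔmul : ∀ a d : C, Δ (a * d) = Δ a * Δ d)
    (hεmul : ∀ a d : C, ε (a * d) = ε a * ε d)
    (hcoassoc : ∀ a : C, lTensor C Δ (Δ a) =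
      (TensorProduct.assoc k C C C) (rTensor C Δ (Δ a)))
    (hleftcounit : ∀ a : C, TensorProduct.lid k C (rTensor C ε (Δ a)) = a)
    (b : C) (hb : ε b = 1) :
    ∀ a : C, TensorProduct.rid k C (LinearMap.lTensor C ε (Δ (cbElt k Δ ε b a))) =
      cbElt k Δ ε b a := by
  intro a
  set f : C →ₗ[k] k := ε ∘ₗ LinearMap.mulRight k b with hf
  have hr : rTensor C Δ (Δ a) =
      (TensorProduct.assoc k C C C).symm (lTensor C Δ (Δ a)) := by
    rw [hcoassoc a, LinearEquiv.symm_apply_apply]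
  rw [cbElt, delta_rid_lTensor, hr]
  -- Now induct on `Δ a`.
  induction (Δ a) using TensorProduct.induction_on with
  | zero => simp
  | tmul c d =>
      rw [lTensor_tmul, assoc_piece, hleftcounit]
      simp [hf, TensorProduct.smul_tmul']
  | add x y hx hy => simp only [map_add, hx, hy]
end
end

section
/- Let $Y$ be a coalgebra and $A$ a bialgebra over a field, and let $h\in A$ satisfy $\varepsilon_A(h)=1$ and $(h\otimes1)\Delta_A(h)=h\otimes h$. Define $\overline{\Delta}\colon Y\otimes A\to (Y\otimes A)\otimes(Y\otimes A)$ by $\overline{\Delta}(y\otimes a)=(y_{(1)}\otimes h a_{(1)})\otimes(y_{(2)}\otimes a_{(2)})$. Then $\overline{\Delta}$ is coassociative: $(\overline{\Delta}\otimes\mathrm{id})\overline{\Delta}=(\mathrm{id}\otimes\overline{\Delta})\overline{\Delta}$. -/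
open TensorProduct LinearMap

noncomputable section

variable (k : Type*) {Y A : Type*} [CommRing k]
  [AddCommGroup Y] [Module k Y] [Coalgebra k Y] [Ring A] [Bialgebra k A]

/-- The partial smash coproduct comultiplication
`Δ̄(y ⊗ a) = (y₍₁₎ ⊗ h a₍₁₎) ⊗ (y₍₂₎ ⊗ a₍₂₎)` on `Y ⊗ A`. -/
def smashComul (h : A) : Y ⊗[k] A →ₗ[k] (Y ⊗[k] A) ⊗[k] (Y ⊗[k] A) :=
  rTensor (Y ⊗[k] A) (lTensor Y (LinearMap.mulLeft k h)) ∘ₗ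
    (TensorProduct.tensorTensorTensorComm k Y Y A A).toLinearMap ∘ₗ
    TensorProduct.map (Coalgebra.comul (R := k) (A := Y))
      (Coalgebra.comul (R := k) (A := A))

/-!
Write `Δ̄ = (φ ⊗ id) ∘ Δ` with `Δ` the tensor product comultiplication of `Y ⊗ A` and
`φ = id ⊗ (h · _)`. Since `Δ(h a) = Δ(h) Δ(a)`, the hypothesis `(h ⊗ 1) Δ(h) = h ⊗ h` says exactly
that `(φ ⊗ id) Δ φ = (φ ⊗ φ) Δ`. Using this, both sides of the coassociativity equation become
`((φ ⊗ φ) ⊗ id) (Δ ⊗ id) Δ`, by coassociativity of `Δ`.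
-/

open Coalgebra (comul)

section

variable {R C : Type*} [CommSemiring R] [AddCommMonoid C] [Module R C]

/-- The condition under which the twisted comultiplication `(φ ⊗ id) ∘ Δ` is coassociative. -/
def IsComulTwist [CoalgebraStruct R C] (φ : C →ₗ[R] C) : Prop :=
  φ.rTensor C ∘ₗ comul ∘ₗ φ = map φ φ ∘ₗ comul

theorem IsComulTwist.coassoc [Coalgebra R C] {φ : C →ₗ[R] C} (hφ : IsComulTwist φ) :
    (φ.rTensor C ∘ₗ comul).rTensor C ∘ₗ φ.rTensor C ∘ₗ comul =
      (TensorProduct.assoc R C C C).symm.toLinearMap ∘ₗ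
        (φ.rTensor C ∘ₗ comul).lTensor C ∘ₗ φ.rTensor C ∘ₗ comul := by
  unfold IsComulTwist at hφ
  calc (φ.rTensor C ∘ₗ comul).rTensor C ∘ₗ φ.rTensor C ∘ₗ comul
      = (φ.rTensor C ∘ₗ comul ∘ₗ φ).rTensor C ∘ₗ comul := by
        simp only [rTensor_comp, comp_assoc]
    _ = (map φ φ).rTensor C ∘ₗ comul.rTensor C ∘ₗ comul := by
        rw [hφ, rTensor_comp, comp_assoc]
    _ = (map φ φ).rTensor C ∘ₗ (TensorProduct.assoc R C C C).symm.toLinearMap ∘ₗ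
          comul.lTensor C ∘ₗ comul := by
        rw [Coalgebra.coassoc_symm]
    _ = _ := by
        rw [← comp_assoc, rTensor, map_map_comp_assoc_symm_eq, comp_assoc]
        congr 1
        simp only [lTensor, rTensor, ← comp_assoc, ← map_comp, comp_id, id_comp]

theorem IsComulTwist.lTensor {A : Type*} (Y : Type*) [AddCommMonoid Y] [Module R Y]
    [AddCommMonoid A] [Module R A] [CoalgebraStruct R Y] [CoalgebraStruct R A]
    {ψ : A →ₗ[R] A} (hψ : IsComulTwist ψ) : IsComulTwist (ψ.lTensor Y) := by
  unfold IsComulTwist at hψ ⊢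
  have hcomul : (comul : Y ⊗[R] A →ₗ[R] _) =
      (tensorTensorTensorComm R Y Y A A).toLinearMap ∘ₗ map comul comul := rfl
  calc (ψ.lTensor Y).rTensor (Y ⊗[R] A) ∘ₗ comul ∘ₗ ψ.lTensor Y
      = (tensorTensorTensorComm R Y Y A A).toLinearMap ∘ₗ
          map comul (ψ.rTensor A ∘ₗ comul ∘ₗ ψ) := by
        rw [hcomul, rTensor, LinearMap.lTensor, ← map_id]
        simp only [← comp_assoc]
        rw [← tensorTensorTensorComm_comp_map]
        simp only [comp_assoc, ← map_comp, comp_id, map_id, id_comp, rTensor]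
    _ = map (ψ.lTensor Y) (ψ.lTensor Y) ∘ₗ comul := by
        rw [hψ, hcomul, ← comp_assoc, LinearMap.lTensor, ← tensorTensorTensorComm_comp_map,
          comp_assoc, ← map_comp, map_id, id_comp]

theorem isComulTwist_mulLeft {A : Type*} [Semiring A] [Bialgebra R A] {h : A}
    (hh : (h ⊗ₜ[R] (1 : A)) * comul h = h ⊗ₜ[R] h) : IsComulTwist (mulLeft R h) := by
  ext a
  calc (mulLeft R h).rTensor A (comul (h * a))
      = mulLeft R (h ⊗ₜ[R] (1 : A)) (comul h * comul a) := by
        rw [Bialgebra.comul_mul, mulLeft_tmul, mulLeft_one]; rfl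
    _ = mulLeft R (h ⊗ₜ[R] h) (comul a) := by
        rw [mulLeft_apply, mulLeft_apply, ← mul_assoc, hh]
    _ = map (mulLeft R h) (mulLeft R h) (comul a) := by
        rw [mulLeft_tmul]

end

theorem stmt_13_general {k Y A : Type*} [CommRing k]
    [AddCommGroup Y] [Module k Y] [Coalgebra k Y] [Ring A] [Bialgebra k A]
    (h : A)
    (h2 : (h ⊗ₜ[k] (1 : A)) * Coalgebra.comul (R := k) h = h ⊗ₜ[k] h) :
    rTensor (Y ⊗[k] A) (smashComul k h) ∘ₗ smashComul k h =
      (TensorProduct.assoc k (Y ⊗[k] A) (Y ⊗[k] A) (Y ⊗[k] A)).symm.toLinearMap ∘ₗ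
        lTensor (Y ⊗[k] A) (smashComul k h) ∘ₗ smashComul k h :=
  ((isComulTwist_mulLeft h2).lTensor Y).coassoc

/-- If `ε(h) = 1` and `(h ⊗ 1) Δ_A(h) = h ⊗ h`, then the partial smash
coproduct comultiplication `Δ̄(y ⊗ a) = (y₍₁₎ ⊗ h a₍₁₎) ⊗ (y₍₂₎ ⊗ a₍₂₎)` is
coassociative. -/
theorem stmt_13 {k Y A : Type*} [CommRing k]
    [AddCommGroup Y] [Module k Y] [Coalgebra k Y] [Ring A] [Bialgebra k A]
    (h : A) (h1 : Coalgebra.counit (R := k) h = 1)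
    (h2 : (h ⊗ₜ[k] (1 : A)) * Coalgebra.comul (R := k) h = h ⊗ₜ[k] h) :
    rTensor (Y ⊗[k] A) (smashComul k h) ∘ₗ smashComul k h =
      (TensorProduct.assoc k (Y ⊗[k] A) (Y ⊗[k] A) (Y ⊗[k] A)).symm.toLinearMap ∘ₗ
        lTensor (Y ⊗[k] A) (smashComul k h) ∘ₗ smashComul k h :=
  stmt_13_general h h2
end
end

section
/- Let $\Bbbk$ be a field of characteristic different from $2$ and let $H_4=\Bbbk\langle g,x\mid g^2=1,\ x^2=0,\ xg=-gx\rangle$ be the Sweedler Hopf algebra, with $\Delta(g)=g\otimes g$, $\Delta(x)=x\otimes1+g\otimes x$, $\varepsilon(g)=1$, $\varepsilon(x)=0$. For any scalar $\alpha\in\Bbbk$, the element $z=\tfrac{1+g}{2}+\alpha\,gx$ satisfies $\varepsilon(z)=1$ and $(z\otimes1)\Delta(z)=z\otimes z=\Delta(z)(z\otimes1)$. -/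
open TensorProduct

/-- In the Sweedler Hopf algebra `H₄` over a field of characteristic
`≠ 2` (presented by generators `g, x` with `g² = 1`, `x² = 0`, `xg = -gx`,
`Δ(g) = g ⊗ g`, `Δ(x) = x ⊗ 1 + g ⊗ x`, `ε(g) = 1`, `ε(x) = 0`), for any scalar `α`
the element `z = (1+g)/2 + α gx` satisfies `ε(z) = 1` and
`(z ⊗ 1) Δ(z) = z ⊗ z = Δ(z)(z ⊗ 1)`. -/
theorem stmt_17 {k H : Type*} [Field k] (hchar : (2 : k) ≠ 0)
    [Ring H] [HopfAlgebra k H] (g x : H)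
    (hg : g * g = 1) (hx : x * x = 0) (hxg : x * g = -(g * x))
    (hΔg : Coalgebra.comul (R := k) g = g ⊗ₜ[k] g)
    (hΔx : Coalgebra.comul (R := k) x = x ⊗ₜ[k] (1 : H) + g ⊗ₜ[k] x)
    (hεg : Coalgebra.counit (R := k) g = 1)
    (hεx : Coalgebra.counit (R := k) x = 0) (α : k) :
    Coalgebra.counit (R := k) ((2 : k)⁻¹ • (1 + g) + α • (g * x)) = 1 ∧
    (((2 : k)⁻¹ • (1 + g) + α • (g * x)) ⊗ₜ[k] (1 : H)) *
        Coalgebra.comul (R := k) ((2 : k)⁻¹ • (1 + g) + α • (g * x)) =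
      ((2 : k)⁻¹ • (1 + g) + α • (g * x)) ⊗ₜ[k] ((2 : k)⁻¹ • (1 + g) + α • (g * x)) ∧
    Coalgebra.comul (R := k) ((2 : k)⁻¹ • (1 + g) + α • (g * x)) *
        (((2 : k)⁻¹ • (1 + g) + α • (g * x)) ⊗ₜ[k] (1 : H)) =
      ((2 : k)⁻¹ • (1 + g) + α • (g * x)) ⊗ₜ[k] ((2 : k)⁻¹ • (1 + g) + α • (g * x)) := by
  have hggx : g * (g * x) = x := by rw [← mul_assoc, hg, one_mul]
  have hgxg : (g * x) * g = -x := by rw [mul_assoc, hxg, mul_neg, hggx]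
  have hgxgx : (g * x) * (g * x) = 0 := by
    rw [← mul_assoc, mul_assoc g x g, hxg, mul_neg, hggx, neg_mul, hx, neg_zero]
  refine ⟨?_, ?_, ?_⟩
  · simp only [map_add, map_smul, map_one, Bialgebra.counit_one, Bialgebra.counit_mul,
      hεg, hεx, mul_zero, smul_zero, add_zero, smul_eq_mul, mul_add, mul_one]
    rw [← two_mul, mul_inv_cancel₀ hchar]
  · simp only [map_add, map_smul, Bialgebra.comul_one, Bialgebra.comul_mul, hΔg, hΔx,
      Algebra.TensorProduct.one_def]
    simp only [mul_add, add_mul, smul_mul_smul_comm, smul_mul_assoc, mul_smul_comm,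
      Algebra.TensorProduct.tmul_mul_tmul, one_mul, mul_one, hg, hggx, hgxg, hgxgx,
      tmul_add, add_tmul, ← smul_tmul', tmul_smul, zero_tmul, tmul_zero, smul_zero,
      tmul_neg, neg_tmul]
    module
  · simp only [map_add, map_smul, Bialgebra.comul_one, Bialgebra.comul_mul, hΔg, hΔx,
      Algebra.TensorProduct.one_def]
    simp only [mul_add, add_mul, smul_mul_smul_comm, smul_mul_assoc, mul_smul_comm,
      Algebra.TensorProduct.tmul_mul_tmul, one_mul, mul_one, hg, hggx, hgxg, hgxgx,
      tmul_add, add_tmul, ← smul_tmul', tmul_smul, zero_tmul, tmul_zero, smul_zero,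
      tmul_neg, neg_tmul]
    module
end
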